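/- The treated-arm variance estimator is conservative in expectation: under the stepped-wedge randomization, E[V̂ar(τ̂1)] ≥ Var(τ̂1), where V̂ar(τ̂1)(σ) = (1/N²)·[ Σ_{i,j} Z_{ij}·((1 − e_j)/e_j²)·r1(i,j)² + Σ_{(i,j) ≠ (i′,j′), e¹¹ > 0} Z_{ij}·Z_{i′j′}·((e¹¹_{(i,j),(i′,j′)} − e_j·e_{j′})/(e¹¹_{(i,j),(i′,j′)}·e_j·e_{j′}))·r1(i,j)·r1(i′,j′) + Σ_{(i,j) ≠ (i′,j′), e¹¹ = 0} ( Z_{ij}·r1(i,j)²/(2e_j) + Z_{i′j′}·r1(i′,j′)²/(2e_{j′}) ) ], with both pair sums over ordered pairs of distinct cluster-periods. -/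

import Mathlib

open Finset
open scoped Classical

noncomputable section

/-- Probability of an event under the uniform random permutation of `Fin I`
(each of the `I!` permutations has probability `1/I!`). -/
def swProb (I : ℕ) (p : Equiv.Perm (Fin I) → Prop) : ℝ :=
  ((Finset.univ.filter p).card : ℝ) / (Nat.factorial I : ℝ)

/-- Expectation of a real statistic under the uniform random permutation of `Fin I`. -/
def swExp (I : ℕ) (f : Equiv.Perm (Fin I) → ℝ) : ℝ :=
  (∑ σ : Equiv.Perm (Fin I), f σ) / (Nat.factorial I : ℝ)

/-- Variance with respect to the uniform random permutation. -/
def swVar (I : ℕ) (f : Equiv.Perm (Fin I) → ℝ) : ℝ :=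
  swExp I (fun σ => (f σ - swExp I f) ^ 2)

/-- Covariance with respect to the uniform random permutation. -/
def swCov (I : ℕ) (f g : Equiv.Perm (Fin I) → ℝ) : ℝ :=
  swExp I (fun σ => (f σ - swExp I f) * (g σ - swExp I g))

/-- Treatment indicator: cluster `i` is treated in period `j` iff its position
`σ(i) + 1` (in `{1,…,I}`) is at most the treated count `T j`. -/
def swZ (I : ℕ) (T : ℕ → ℕ) (σ : Equiv.Perm (Fin I)) (i : Fin I) (j : ℕ) : ℕ :=
  if (σ i : ℕ) < T j then 1 else 0

/-- Cluster-level propensity score `e_j = I_j / I`. -/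
def swE (I : ℕ) (T : ℕ → ℕ) (j : ℕ) : ℝ := (T j : ℝ) / (I : ℝ)

/-- Joint probability that both cluster-periods are treated. -/
def swE11 (I : ℕ) (T : ℕ → ℕ) (p q : Fin I × ℕ) : ℝ :=
  swProb I (fun σ => swZ I T σ p.1 p.2 = 1 ∧ swZ I T σ q.1 q.2 = 1)

/-- Joint probability that both cluster-periods are untreated. -/
def swE00 (I : ℕ) (T : ℕ → ℕ) (p q : Fin I × ℕ) : ℝ :=
  swProb I (fun σ => swZ I T σ p.1 p.2 = 0 ∧ swZ I T σ q.1 q.2 = 0)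

/-- Joint probability that the first cluster-period is treated and the second untreated. -/
def swE10 (I : ℕ) (T : ℕ → ℕ) (p q : Fin I × ℕ) : ℝ :=
  swProb I (fun σ => swZ I T σ p.1 p.2 = 1 ∧ swZ I T σ q.1 q.2 = 0)

/-- Treated-arm Horvitz–Thompson estimator. -/
def tauHat1 (I J : ℕ) (T : ℕ → ℕ) (N : ℝ) (r1 : Fin I → ℕ → ℝ)
    (σ : Equiv.Perm (Fin I)) : ℝ :=
  (1 / N) * ∑ i : Fin I, ∑ j ∈ Finset.Icc 1 J, (swZ I T σ i j : ℝ) * r1 i j / swE I T j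

/-- Control-arm Horvitz–Thompson estimator. -/
def tauHat0 (I J : ℕ) (T : ℕ → ℕ) (N : ℝ) (r0 : Fin I → ℕ → ℝ)
    (σ : Equiv.Perm (Fin I)) : ℝ :=
  (1 / N) * ∑ i : Fin I, ∑ j ∈ Finset.Icc 1 J,
    (1 - (swZ I T σ i j : ℝ)) * r0 i j / (1 - swE I T j)

/-- Horvitz–Thompson estimator of the residualized average treatment effect. -/
def tauHatD (I J : ℕ) (T : ℕ → ℕ) (N : ℝ) (r1 r0 : Fin I → ℕ → ℝ)
    (σ : Equiv.Perm (Fin I)) : ℝ :=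
  (1 / N) * ∑ i : Fin I, ∑ j ∈ Finset.Icc 1 J,
    ((swZ I T σ i j : ℝ) * r1 i j / swE I T j
      - (1 - (swZ I T σ i j : ℝ)) * r0 i j / (1 - swE I T j))

/-- Treated-arm variance estimator. -/
def varHat1 (I J : ℕ) (T : ℕ → ℕ) (N : ℝ) (r1 : Fin I → ℕ → ℝ)
    (σ : Equiv.Perm (Fin I)) : ℝ :=
  (1 / N ^ 2) *
    ((∑ p ∈ Finset.univ ×ˢ Finset.Icc 1 J,
        (swZ I T σ p.1 p.2 : ℝ) * ((1 - swE I T p.2) / (swE I T p.2) ^ 2) * (r1 p.1 p.2) ^ 2)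
      + (∑ p ∈ Finset.univ ×ˢ Finset.Icc 1 J, ∑ q ∈ Finset.univ ×ˢ Finset.Icc 1 J,
          if p ≠ q ∧ 0 < swE11 I T p q then
            (swZ I T σ p.1 p.2 : ℝ) * (swZ I T σ q.1 q.2 : ℝ) *
              ((swE11 I T p q - swE I T p.2 * swE I T q.2) /
                (swE11 I T p q * swE I T p.2 * swE I T q.2)) *
              r1 p.1 p.2 * r1 q.1 q.2
          else 0)
      + (∑ p ∈ Finset.univ ×ˢ Finset.Icc 1 J, ∑ q ∈ Finset.univ ×ˢ Finset.Icc 1 J,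
          if p ≠ q ∧ swE11 I T p q = 0 then
            (swZ I T σ p.1 p.2 : ℝ) * (r1 p.1 p.2) ^ 2 / (2 * swE I T p.2)
              + (swZ I T σ q.1 q.2 : ℝ) * (r1 q.1 q.2) ^ 2 / (2 * swE I T q.2)
          else 0))

/-- Control-arm variance estimator. -/
def varHat0 (I J : ℕ) (T : ℕ → ℕ) (N : ℝ) (r0 : Fin I → ℕ → ℝ)
    (σ : Equiv.Perm (Fin I)) : ℝ :=
  (1 / N ^ 2) *
    ((∑ p ∈ Finset.univ ×ˢ Finset.Icc 1 J,
        (1 - (swZ I T σ p.1 p.2 : ℝ)) * (swE I T p.2 / (1 - swE I T p.2) ^ 2) * (r0 p.1 p.2) ^ 2)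
      + (∑ p ∈ Finset.univ ×ˢ Finset.Icc 1 J, ∑ q ∈ Finset.univ ×ˢ Finset.Icc 1 J,
          if p ≠ q ∧ 0 < swE00 I T p q then
            (1 - (swZ I T σ p.1 p.2 : ℝ)) * (1 - (swZ I T σ q.1 q.2 : ℝ)) *
              ((swE00 I T p q - (1 - swE I T p.2) * (1 - swE I T q.2)) /
                (swE00 I T p q * (1 - swE I T p.2) * (1 - swE I T q.2))) *
              r0 p.1 p.2 * r0 q.1 q.2
          else 0)
      + (∑ p ∈ Finset.univ ×ˢ Finset.Icc 1 J, ∑ q ∈ Finset.univ ×ˢ Finset.Icc 1 J,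
          if p ≠ q ∧ swE00 I T p q = 0 then
            (1 - (swZ I T σ p.1 p.2 : ℝ)) * (r0 p.1 p.2) ^ 2 / (2 * (1 - swE I T p.2))
              + (1 - (swZ I T σ q.1 q.2 : ℝ)) * (r0 q.1 q.2) ^ 2 / (2 * (1 - swE I T q.2))
          else 0))

/-- Covariance estimator. -/
def covHat (I J : ℕ) (T : ℕ → ℕ) (N : ℝ) (r1 r0 : Fin I → ℕ → ℝ)
    (σ : Equiv.Perm (Fin I)) : ℝ :=
  -(1 / N ^ 2) *
      (∑ p ∈ Finset.univ ×ˢ Finset.Icc 1 J, ∑ q ∈ Finset.univ ×ˢ Finset.Icc 1 J,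
        if swE10 I T p q = 0 then
          (swZ I T σ p.1 p.2 : ℝ) * (r1 p.1 p.2) ^ 2 / (2 * swE I T p.2)
            + (1 - (swZ I T σ q.1 q.2 : ℝ)) * (r0 q.1 q.2) ^ 2 / (2 * (1 - swE I T q.2))
        else 0)
    + (1 / N ^ 2) *
      (∑ p ∈ Finset.univ ×ˢ Finset.Icc 1 J, ∑ q ∈ Finset.univ ×ˢ Finset.Icc 1 J,
        if p ≠ q ∧ 0 < swE10 I T p q then
          (swZ I T σ p.1 p.2 : ℝ) * (1 - (swZ I T σ q.1 q.2 : ℝ)) *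
            ((swE10 I T p q - swE I T p.2 * (1 - swE I T q.2)) /
              (swE10 I T p q * swE I T p.2 * (1 - swE I T q.2))) *
            r1 p.1 p.2 * r0 q.1 q.2
        else 0)

/-- The adoption period of a cluster placed `l`-th in line:
`P_l = min { j ∈ {1,…,J} : l ≤ I_j }` if `l ≤ I_J`, and `J + 1` otherwise. -/
def swP (J : ℕ) (T : ℕ → ℕ) (l : ℕ) : ℕ :=
  if l ≤ T J then sInf {j | 1 ≤ j ∧ j ≤ J ∧ l ≤ T j} else J + 1

/-- The combinatorial matrix entry `c(i, l)`. -/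
def swC (I J : ℕ) (T : ℕ → ℕ) (N : ℝ) (r1 r0 : Fin I → ℕ → ℝ)
    (i : Fin I) (l : ℕ) : ℝ :=
  (1 / N) * ((∑ j ∈ Finset.Icc (swP J T l) J, r1 i j / swE I T j)
    - ∑ j ∈ Finset.Icc 1 (swP J T l - 1), r0 i j / (1 - swE I T j))



section SWHelpers
variable {I : ℕ}


lemma sw_fact_ne : ((Nat.factorial I : ℝ)) ≠ 0 :=
  Nat.cast_ne_zero.mpr (Nat.factorial_pos I).ne'

lemma swExp_add (f g : Equiv.Perm (Fin I) → ℝ) :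
    swExp I (fun σ => f σ + g σ) = swExp I f + swExp I g := by
  unfold swExp; rw [Finset.sum_add_distrib, add_div]

lemma swExp_sub (f g : Equiv.Perm (Fin I) → ℝ) :
    swExp I (fun σ => f σ - g σ) = swExp I f - swExp I g := by
  unfold swExp; rw [Finset.sum_sub_distrib, sub_div]

lemma swExp_const (c : ℝ) : swExp I (fun _ => c) = c := by
  unfold swExp
  rw [Finset.sum_const, Finset.card_univ, Fintype.card_perm, Fintype.card_fin,
    nsmul_eq_mul]
  field_simp

lemma swExp_mul_const (f : Equiv.Perm (Fin I) → ℝ) (c : ℝ) :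
    swExp I (fun σ => f σ * c) = swExp I f * c := by
  unfold swExp; rw [← Finset.sum_mul]; ring

lemma swExp_sum {ι : Type*} (s : Finset ι) (f : ι → Equiv.Perm (Fin I) → ℝ) :
    swExp I (fun σ => ∑ p ∈ s, f p σ) = ∑ p ∈ s, swExp I (f p) := by
  unfold swExp; rw [Finset.sum_comm, Finset.sum_div]

lemma swExp_indicator (P : Equiv.Perm (Fin I) → Prop) [DecidablePred P] :
    swExp I (fun σ => if P σ then (1:ℝ) else 0) = swProb I P := by
  unfold swExp swProb
  rw [Finset.sum_boole]
  congr!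

lemma swProb_congr {P Q : Equiv.Perm (Fin I) → Prop} (h : ∀ σ, P σ ↔ Q σ) :
    swProb I P = swProb I Q := by
  unfold swProb
  rw [Finset.filter_congr (fun σ _ => h σ)]

lemma swProb_nonneg (P : Equiv.Perm (Fin I) → Prop) : 0 ≤ swProb I P := by
  unfold swProb; positivity

lemma sw_fiber_card (i b b' : Fin I) :
    (Finset.univ.filter fun σ : Equiv.Perm (Fin I) => σ i = b).card
      = (Finset.univ.filter fun σ : Equiv.Perm (Fin I) => σ i = b').card := by
  apply Finset.card_nbij' (fun σ => Equiv.swap b b' * σ) (fun σ => Equiv.swap b b' * σ)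
  · intro σ hσ
    simp only [Finset.mem_coe, Finset.mem_filter, Finset.mem_univ, true_and] at hσ ⊢
    rw [Equiv.Perm.mul_apply, hσ, Equiv.swap_apply_left]
  · intro σ hσ
    simp only [Finset.mem_coe, Finset.mem_filter, Finset.mem_univ, true_and] at hσ ⊢
    rw [Equiv.Perm.mul_apply, hσ, Equiv.swap_apply_right]
  · intro σ _; simp [← mul_assoc]
  · intro σ _; simp [← mul_assoc]

lemma sw_card_lt (i : Fin I) (t : ℕ) (hI : 0 < I) (ht : t ≤ I) :
    swProb I (fun σ => (σ i : ℕ) < t) = (t : ℝ) / (I : ℝ) := by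
  set c := (Finset.univ.filter fun σ : Equiv.Perm (Fin I) => σ i = ⟨0, hI⟩).card with hc
  have hfib : ∀ b : Fin I,
      (Finset.univ.filter fun σ : Equiv.Perm (Fin I) => σ i = b).card = c :=
    fun b => sw_fiber_card i b ⟨0, hI⟩
  have htot : Nat.factorial I = I * c := by
    have h1 : (Finset.univ : Finset (Equiv.Perm (Fin I))).card
        = ∑ b : Fin I, ((Finset.univ.filter
            fun σ : Equiv.Perm (Fin I) => σ i = b).card) :=
      Finset.card_eq_sum_card_fiberwise (fun x _ => Finset.mem_univ _)
    simp only [hfib, Finset.sum_const, Finset.card_univ, Fintype.card_perm,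
      Fintype.card_fin, smul_eq_mul] at h1
    exact h1
  have hsub : (Finset.univ.filter fun b : Fin I => (b : ℕ) < t)
      = Finset.map (Fin.castLEEmb ht) Finset.univ := by
    ext b
    simp only [Finset.mem_filter, Finset.mem_univ, true_and, Finset.mem_map]
    constructor
    · intro hb; exact ⟨⟨b, hb⟩, by simp [Fin.ext_iff]⟩
    · rintro ⟨a, rfl⟩; simpa using a.2
  have hcard : (Finset.univ.filter fun σ : Equiv.Perm (Fin I) => (σ i : ℕ) < t).card
      = t * c := by
    have h2 : (Finset.univ.filter fun σ : Equiv.Perm (Fin I) => (σ i : ℕ) < t).card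
        = ∑ b ∈ Finset.univ.filter (fun b : Fin I => (b : ℕ) < t),
            ((Finset.univ.filter fun σ : Equiv.Perm (Fin I) => (σ i : ℕ) < t).filter
              fun σ => σ i = b).card := by
      apply Finset.card_eq_sum_card_fiberwise
      intro σ hσ
      simp only [Finset.mem_coe, Finset.mem_filter, Finset.mem_univ, true_and] at hσ ⊢
      exact hσ
    rw [h2]
    have h3 : ∀ b ∈ Finset.univ.filter (fun b : Fin I => (b : ℕ) < t),
        ((Finset.univ.filter fun σ : Equiv.Perm (Fin I) => (σ i : ℕ) < t).filter
          fun σ => σ i = b).card = c := by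
      intro b hb
      simp only [Finset.mem_filter, Finset.mem_univ, true_and] at hb
      rw [show ((Finset.univ.filter fun σ : Equiv.Perm (Fin I) => (σ i : ℕ) < t).filter
            fun σ => σ i = b) = Finset.univ.filter fun σ : Equiv.Perm (Fin I) => σ i = b from ?_]
      · exact hfib b
      · ext σ
        simp only [Finset.mem_filter, Finset.mem_univ, true_and]
        constructor
        · exact fun h => h.2
        · intro h; exact ⟨by rw [h]; exact hb, h⟩
    rw [Finset.sum_congr rfl h3, Finset.sum_const, smul_eq_mul, hsub,
      Finset.card_map, Finset.card_univ, Fintype.card_fin]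
  have hcpos : 0 < c := by
    rcases Nat.eq_zero_or_pos c with h | h
    · rw [h, mul_zero] at htot
      exact absurd htot (Nat.factorial_pos I).ne'
    · exact h
  have key : ∀ (inst : DecidablePred fun σ : Equiv.Perm (Fin I) => (σ i : ℕ) < t),
      (@Finset.filter _ _ inst Finset.univ).card = t * c := fun inst => by
    convert hcard using 3
  unfold swProb
  rw [key _, htot]
  push_cast
  rw [div_eq_div_iff (by positivity) (by positivity)]
  ring

lemma swVar_sum_form {ι : Type*} (s : Finset ι) (Z : ι → Equiv.Perm (Fin I) → ℝ)
    (w : ι → ℝ) :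
    swVar I (fun σ => ∑ p ∈ s, Z p σ * w p)
      = ∑ p ∈ s, ∑ q ∈ s,
          (swExp I (fun σ => Z p σ * Z q σ) - swExp I (Z p) * swExp I (Z q))
            * (w p * w q) := by
  have hm : swExp I (fun σ => ∑ p ∈ s, Z p σ * w p)
      = ∑ p ∈ s, swExp I (Z p) * w p := by
    rw [swExp_sum]
    exact Finset.sum_congr rfl fun p _ => swExp_mul_const _ _
  unfold swVar
  have hfun : (fun σ => ((∑ p ∈ s, Z p σ * w p)
        - swExp I (fun σ => ∑ p ∈ s, Z p σ * w p)) ^ 2)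
      = fun σ => ∑ p ∈ s, ∑ q ∈ s,
          ((Z p σ - swExp I (Z p)) * (Z q σ - swExp I (Z q))) * (w p * w q) := by
    funext σ
    rw [hm, ← Finset.sum_sub_distrib]
    rw [show ∑ p ∈ s, (Z p σ * w p - swExp I (Z p) * w p)
        = ∑ p ∈ s, (Z p σ - swExp I (Z p)) * w p from
      Finset.sum_congr rfl fun p _ => by ring]
    rw [sq, Finset.sum_mul_sum]
    exact Finset.sum_congr rfl fun p _ => Finset.sum_congr rfl fun q _ => by ring
  rw [hfun, swExp_sum]
  refine Finset.sum_congr rfl fun p _ => ?_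
  rw [swExp_sum]
  refine Finset.sum_congr rfl fun q _ => ?_
  have : (fun σ => ((Z p σ - swExp I (Z p)) * (Z q σ - swExp I (Z q))) * (w p * w q))
      = fun σ => (Z p σ * Z q σ) * (w p * w q)
          - Z p σ * (swExp I (Z q) * (w p * w q))
          - Z q σ * (swExp I (Z p) * (w p * w q))
          + (swExp I (Z p) * (swExp I (Z q) * (w p * w q))) := by
    funext σ; ring
  rw [this]
  rw [show (fun σ => (Z p σ * Z q σ) * (w p * w q)
          - Z p σ * (swExp I (Z q) * (w p * w q))
          - Z q σ * (swExp I (Z p) * (w p * w q))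
          + swExp I (Z p) * (swExp I (Z q) * (w p * w q)))
      = fun σ => (((Z p σ * Z q σ) * (w p * w q)
          - Z p σ * (swExp I (Z q) * (w p * w q)))
          - Z q σ * (swExp I (Z p) * (w p * w q)))
          + swExp I (Z p) * (swExp I (Z q) * (w p * w q)) from rfl]
  rw [swExp_add, swExp_sub, swExp_sub, swExp_mul_const, swExp_mul_const,
    swExp_mul_const, swExp_const]
  ring


lemma swExp_const_mul (c : ℝ) (f : Equiv.Perm (Fin I) → ℝ) :
    swExp I (fun σ => c * f σ) = c * swExp I f := by
  unfold swExp; rw [← Finset.mul_sum]; ring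

lemma swZ_eq_one (T : ℕ → ℕ) (σ : Equiv.Perm (Fin I)) (i : Fin I) (j : ℕ) :
    swZ I T σ i j = 1 ↔ (σ i : ℕ) < T j := by
  unfold swZ; split <;> simp_all

lemma swZ_cast (T : ℕ → ℕ) (σ : Equiv.Perm (Fin I)) (i : Fin I) (j : ℕ) :
    ((swZ I T σ i j : ℕ) : ℝ) = if (σ i : ℕ) < T j then (1:ℝ) else 0 := by
  unfold swZ; split <;> simp

lemma swExp_swZ (T : ℕ → ℕ) (i : Fin I) (j : ℕ) (hI : 0 < I) (ht : T j ≤ I) :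
    swExp I (fun σ => ((swZ I T σ i j : ℕ) : ℝ)) = swE I T j := by
  rw [show (fun σ : Equiv.Perm (Fin I) => ((swZ I T σ i j : ℕ) : ℝ))
      = fun σ => if (σ i : ℕ) < T j then (1:ℝ) else 0 from funext fun σ => swZ_cast T σ i j]
  rw [swExp_indicator, sw_card_lt i (T j) hI ht]
  rfl

lemma swExp_swZ_mul (T : ℕ → ℕ) (p q : Fin I × ℕ) :
    swExp I (fun σ => ((swZ I T σ p.1 p.2 : ℕ) : ℝ) * ((swZ I T σ q.1 q.2 : ℕ) : ℝ))
      = swE11 I T p q := by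
  rw [show (fun σ : Equiv.Perm (Fin I) =>
        ((swZ I T σ p.1 p.2 : ℕ) : ℝ) * ((swZ I T σ q.1 q.2 : ℕ) : ℝ))
      = fun σ => if ((σ p.1 : ℕ) < T p.2 ∧ (σ q.1 : ℕ) < T q.2) then (1:ℝ) else 0 from
    funext fun σ => by rw [swZ_cast, swZ_cast, ite_zero_mul_ite_zero, mul_one]]
  rw [swExp_indicator]
  unfold swE11
  exact swProb_congr fun σ =>
    and_congr (swZ_eq_one T σ p.1 p.2).symm (swZ_eq_one T σ q.1 q.2).symm

lemma swE11_diag (T : ℕ → ℕ) (p : Fin I × ℕ) (hI : 0 < I) (ht : T p.2 ≤ I) :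
    swE11 I T p p = swE I T p.2 := by
  unfold swE11
  rw [swProb_congr (Q := fun σ => (σ p.1 : ℕ) < T p.2) fun σ => by
    rw [and_self, swZ_eq_one]]
  rw [sw_card_lt p.1 (T p.2) hI ht]
  rfl

end SWHelpers


theorem statement14
    (I J : ℕ) (hI : 2 ≤ I) (hJ : 1 ≤ J)
    (T : ℕ → ℕ)
    (hmono : ∀ j j', 1 ≤ j → j ≤ j' → j' ≤ J → T j ≤ T j')
    (hlb : ∀ j, 1 ≤ j → j ≤ J → 1 ≤ T j)
    (hub : ∀ j, 1 ≤ j → j ≤ J → T j ≤ I - 1)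
    (N : ℝ) (hN : 0 < N) (r1 : Fin I → ℕ → ℝ) :
    swVar I (tauHat1 I J T N r1) ≤ swExp I (varHat1 I J T N r1) := by
  have hI0 : 0 < I := by omega
  have hmemT : ∀ p : Fin I × ℕ, p ∈ Finset.univ ×ˢ Finset.Icc 1 J →
      1 ≤ T p.2 ∧ T p.2 ≤ I := by
    intro p hp
    rw [Finset.mem_product, Finset.mem_Icc] at hp
    refine ⟨hlb p.2 hp.2.1 hp.2.2, ?_⟩
    have := hub p.2 hp.2.1 hp.2.2
    omega
  have hepos : ∀ p : Fin I × ℕ, p ∈ Finset.univ ×ˢ Finset.Icc 1 J →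
      0 < swE I T p.2 := by
    intro p hp
    exact div_pos (by exact_mod_cast (hmemT p hp).1) (by exact_mod_cast hI0)
  -- variance identity
  have htau : tauHat1 I J T N r1
      = fun σ => ∑ p ∈ Finset.univ ×ˢ Finset.Icc 1 J,
          ((swZ I T σ p.1 p.2 : ℕ) : ℝ) * (r1 p.1 p.2 / (swE I T p.2 * N)) := by
    funext σ
    unfold tauHat1
    rw [← Finset.sum_product' (s := Finset.univ) (t := Finset.Icc 1 J)
      (f := fun i j => ((swZ I T σ i j : ℕ) : ℝ) * r1 i j / swE I T j)]
    rw [Finset.mul_sum]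
    exact Finset.sum_congr rfl fun p _ => by ring
  have hVar : swVar I (tauHat1 I J T N r1)
      = ∑ p ∈ Finset.univ ×ˢ Finset.Icc 1 J, ∑ q ∈ Finset.univ ×ˢ Finset.Icc 1 J,
          (swE11 I T p q - swE I T p.2 * swE I T q.2)
            * ((r1 p.1 p.2 / (swE I T p.2 * N)) * (r1 q.1 q.2 / (swE I T q.2 * N))) := by
    rw [htau]
    rw [swVar_sum_form (Finset.univ ×ˢ Finset.Icc 1 J)
      (fun p σ => ((swZ I T σ p.1 p.2 : ℕ) : ℝ))
      (fun p => r1 p.1 p.2 / (swE I T p.2 * N))]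
    refine Finset.sum_congr rfl fun p hp => Finset.sum_congr rfl fun q hq => ?_
    rw [swExp_swZ_mul, swExp_swZ T p.1 p.2 hI0 (hmemT p hp).2,
      swExp_swZ T q.1 q.2 hI0 (hmemT q hq).2]
  -- expectation identity
  have hExp : swExp I (varHat1 I J T N r1)
      = (1 / N ^ 2) *
        ((∑ p ∈ Finset.univ ×ˢ Finset.Icc 1 J,
            swE I T p.2 * ((1 - swE I T p.2) / (swE I T p.2) ^ 2 * (r1 p.1 p.2) ^ 2))
          + (∑ p ∈ Finset.univ ×ˢ Finset.Icc 1 J, ∑ q ∈ Finset.univ ×ˢ Finset.Icc 1 J,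
              if p ≠ q ∧ 0 < swE11 I T p q then
                swE11 I T p q * ((swE11 I T p q - swE I T p.2 * swE I T q.2) /
                  (swE11 I T p q * swE I T p.2 * swE I T q.2) * (r1 p.1 p.2 * r1 q.1 q.2))
              else 0)
          + (∑ p ∈ Finset.univ ×ˢ Finset.Icc 1 J, ∑ q ∈ Finset.univ ×ˢ Finset.Icc 1 J,
              if p ≠ q ∧ swE11 I T p q = 0 then
                swE I T p.2 * ((r1 p.1 p.2) ^ 2 / (2 * swE I T p.2))
                  + swE I T q.2 * ((r1 q.1 q.2) ^ 2 / (2 * swE I T q.2))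
              else 0)) := by
    unfold varHat1
    rw [swExp_const_mul]
    congr 1
    rw [swExp_add, swExp_add]
    congr 1
    · congr 1
      · -- first term
        rw [swExp_sum]
        refine Finset.sum_congr rfl fun p hp => ?_
        rw [show (fun σ : Equiv.Perm (Fin I) => ((swZ I T σ p.1 p.2 : ℕ) : ℝ)
              * ((1 - swE I T p.2) / (swE I T p.2) ^ 2) * (r1 p.1 p.2) ^ 2)
            = fun σ => ((swZ I T σ p.1 p.2 : ℕ) : ℝ)
              * ((1 - swE I T p.2) / (swE I T p.2) ^ 2 * (r1 p.1 p.2) ^ 2) from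
          funext fun σ => by ring]
        rw [swExp_mul_const, swExp_swZ T p.1 p.2 hI0 (hmemT p hp).2]
      · -- second term
        rw [swExp_sum]
        refine Finset.sum_congr rfl fun p hp => ?_
        rw [swExp_sum]
        refine Finset.sum_congr rfl fun q hq => ?_
        by_cases h : p ≠ q ∧ 0 < swE11 I T p q
        · simp only [if_pos h]
          rw [show (fun σ : Equiv.Perm (Fin I) =>
                ((swZ I T σ p.1 p.2 : ℕ) : ℝ) * ((swZ I T σ q.1 q.2 : ℕ) : ℝ) *
                  ((swE11 I T p q - swE I T p.2 * swE I T q.2) /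
                    (swE11 I T p q * swE I T p.2 * swE I T q.2)) *
                  r1 p.1 p.2 * r1 q.1 q.2)
              = fun σ => (((swZ I T σ p.1 p.2 : ℕ) : ℝ) * ((swZ I T σ q.1 q.2 : ℕ) : ℝ))
                  * ((swE11 I T p q - swE I T p.2 * swE I T q.2) /
                    (swE11 I T p q * swE I T p.2 * swE I T q.2) * (r1 p.1 p.2 * r1 q.1 q.2)) from
            funext fun σ => by ring]
          rw [swExp_mul_const, swExp_swZ_mul]
        · simp only [if_neg h]
          exact swExp_const 0
    · -- third term
      rw [swExp_sum]
      refine Finset.sum_congr rfl fun p hp => ?_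
      rw [swExp_sum]
      refine Finset.sum_congr rfl fun q hq => ?_
      by_cases h : p ≠ q ∧ swE11 I T p q = 0
      · simp only [if_pos h]
        rw [show (fun σ : Equiv.Perm (Fin I) =>
              ((swZ I T σ p.1 p.2 : ℕ) : ℝ) * (r1 p.1 p.2) ^ 2 / (2 * swE I T p.2)
                + ((swZ I T σ q.1 q.2 : ℕ) : ℝ) * (r1 q.1 q.2) ^ 2 / (2 * swE I T q.2))
            = fun σ => ((swZ I T σ p.1 p.2 : ℕ) : ℝ) * ((r1 p.1 p.2) ^ 2 / (2 * swE I T p.2))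
                + ((swZ I T σ q.1 q.2 : ℕ) : ℝ) * ((r1 q.1 q.2) ^ 2 / (2 * swE I T q.2)) from
          funext fun σ => by ring]
        rw [swExp_add, swExp_mul_const, swExp_mul_const,
          swExp_swZ T p.1 p.2 hI0 (hmemT p hp).2, swExp_swZ T q.1 q.2 hI0 (hmemT q hq).2]
      · simp only [if_neg h]
        exact swExp_const 0
  rw [hVar, hExp]
  -- reorganize RHS as a double sum
  rw [show (∑ p ∈ Finset.univ ×ˢ Finset.Icc 1 J,
        swE I T p.2 * ((1 - swE I T p.2) / (swE I T p.2) ^ 2 * (r1 p.1 p.2) ^ 2))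
      = ∑ p ∈ Finset.univ ×ˢ Finset.Icc 1 J, ∑ q ∈ Finset.univ ×ˢ Finset.Icc 1 J,
          (if q = p then
            swE I T p.2 * ((1 - swE I T p.2) / (swE I T p.2) ^ 2 * (r1 p.1 p.2) ^ 2)
          else 0) from
    Finset.sum_congr rfl fun p hp => by
      rw [Finset.sum_ite_eq' (Finset.univ ×ˢ Finset.Icc 1 J) p
        (fun _ => swE I T p.2 * ((1 - swE I T p.2) / (swE I T p.2) ^ 2 * (r1 p.1 p.2) ^ 2)),
        if_pos hp]]
  rw [← Finset.sum_add_distrib, ← Finset.sum_add_distrib, Finset.mul_sum]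
  refine Finset.sum_le_sum fun p hp => ?_
  rw [← Finset.sum_add_distrib, ← Finset.sum_add_distrib, Finset.mul_sum]
  refine Finset.sum_le_sum fun q hq => ?_
  have hep := hepos p hp
  have heq := hepos q hq
  by_cases hpq : p = q
  · subst hpq
    rw [if_pos rfl, if_neg (by simp), if_neg (by simp),
      swE11_diag T p hI0 (hmemT p hp).2]
    apply le_of_eq
    field_simp
    ring
  · rw [if_neg (fun h => hpq h.symm)]
    have h0 : (0:ℝ) ≤ swE11 I T p q := swProb_nonneg _
    rcases h0.lt_or_eq with h11 | h11
    · rw [if_pos ⟨hpq, h11⟩, if_neg (fun h => absurd h.2 h11.ne')]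
      apply le_of_eq
      have h1 : swE11 I T p q ≠ 0 := ne_of_gt h11
      have h2 : swE I T p.2 ≠ 0 := ne_of_gt hep
      have h3 : swE I T q.2 ≠ 0 := ne_of_gt heq
      have h4 : N ≠ 0 := ne_of_gt hN
      field_simp
      ring
    · rw [if_neg (fun h => by rw [← h11] at h; exact lt_irrefl 0 h.2),
        if_pos ⟨hpq, h11.symm⟩, ← h11]
      have hL : (0 - swE I T p.2 * swE I T q.2)
            * (r1 p.1 p.2 / (swE I T p.2 * N) * (r1 q.1 q.2 / (swE I T q.2 * N)))
          = -(r1 p.1 p.2 * r1 q.1 q.2) / N ^ 2 := by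
        field_simp
        ring
      have hR : (1 / N ^ 2) * ((0 : ℝ) + 0
            + (swE I T p.2 * ((r1 p.1 p.2) ^ 2 / (2 * swE I T p.2))
              + swE I T q.2 * ((r1 q.1 q.2) ^ 2 / (2 * swE I T q.2))))
          = ((r1 p.1 p.2) ^ 2 / 2 + (r1 q.1 q.2) ^ 2 / 2) / N ^ 2 := by
        field_simp
        ring
      rw [hL, hR, div_le_div_iff₀ (by positivity) (by positivity)]
      nlinarith [sq_nonneg (r1 p.1 p.2 + r1 q.1 q.2), sq_nonneg N]
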